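/- Let u be a C² convex solution of the translating soliton equation on an open convex set Ω ⊆ ℝ². Then the function H(x) := 1/√(1 + |∇u(x)|²) satisfies |∇H(x)| ≤ 1 for all x ∈ Ω; consequently H is 1-Lipschitz with respect to the Euclidean distance: |H(x) − H(y)| ≤ |x − y| for all x, y ∈ Ω. -/

import Mathlib

open Real Filter

noncomputable def pd1 (f : ℝ × ℝ → ℝ) (p : ℝ × ℝ) : ℝ := fderiv ℝ f p (1, 0)

noncomputable def pd2 (f : ℝ × ℝ → ℝ) (p : ℝ × ℝ) : ℝ := fderiv ℝ f p (0, 1)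

/-- The translating soliton equation in nondivergence form. -/
def IsSolitonAt (u : ℝ × ℝ → ℝ) (p : ℝ × ℝ) : Prop :=
  (1 + (pd2 u p) ^ 2) * pd1 (pd1 u) p
    - 2 * pd1 u p * pd2 u p * pd2 (pd1 u) p
    + (1 + (pd1 u p) ^ 2) * pd2 (pd2 u) p
  = 1 + (pd1 u p) ^ 2 + (pd2 u p) ^ 2

/-- The mean curvature `H = 1/√(1+|∇u|²)` of the graph of `u`. -/
noncomputable def meanCurv (u : ℝ × ℝ → ℝ) (p : ℝ × ℝ) : ℝ :=
  1 / Real.sqrt (1 + (pd1 u p) ^ 2 + (pd2 u p) ^ 2)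

/-! With `a = ∇u`, `A = D²u` and `W = 1 + |a|²` one has `∇H = -A a / W^{3/2}`, so the gradient
bound is `|A a|² ≤ W³`. Convexity makes `A` positive semidefinite, hence `|A a|² ≤ (tr A)² |a|²`,
and the soliton equation reads `tr A + ⟨A a^⊥, a^⊥⟩ = W`, hence `tr A ≤ W`. Together
`|A a|² ≤ W² (W - 1) ≤ W³`. The Lipschitz bound is the mean value theorem on segments of `Ω`. -/

section QuadraticForm

variable {A₁₁ A₁₂ A₂₂ : ℝ}

theorem sq_le_mul_of_quadForm_nonneg
    (hA : ∀ v₁ v₂ : ℝ, 0 ≤ A₁₁ * v₁ ^ 2 + 2 * A₁₂ * (v₁ * v₂) + A₂₂ * v₂ ^ 2) :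
    A₁₂ ^ 2 ≤ A₁₁ * A₂₂ := by
  have h := discrim_le_zero (a := A₁₁) (b := 2 * A₁₂) (c := A₂₂) fun x => by
    have := hA x 1; linarith
  rw [discrim] at h
  linarith

theorem mulVec_sq_le_of_quadForm_nonneg
    (hA : ∀ v₁ v₂ : ℝ, 0 ≤ A₁₁ * v₁ ^ 2 + 2 * A₁₂ * (v₁ * v₂) + A₂₂ * v₂ ^ 2) (a b : ℝ) :
    (a * A₁₁ + b * A₁₂) ^ 2 + (a * A₁₂ + b * A₂₂) ^ 2 ≤ (A₁₁ + A₂₂) ^ 2 * (a ^ 2 + b ^ 2) := by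
  have htr : 0 ≤ A₁₁ + A₂₂ := by linarith [hA 1 0, hA 0 1]
  -- `|Av|² = (tr A)² |v|² - tr A · ⟨Av^⊥, v^⊥⟩ - det A · |v|²` with `v^⊥ = (b, -a)`
  linear_combination mul_nonneg htr (hA b (-a)) +
    mul_nonneg (sub_nonneg.2 (sq_le_mul_of_quadForm_nonneg hA))
      (add_nonneg (sq_nonneg a) (sq_nonneg b))

theorem soliton_mulVec_sq_le
    (hA : ∀ v₁ v₂ : ℝ, 0 ≤ A₁₁ * v₁ ^ 2 + 2 * A₁₂ * (v₁ * v₂) + A₂₂ * v₂ ^ 2) {a b : ℝ}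
    (hsol : (1 + b ^ 2) * A₁₁ - 2 * a * b * A₁₂ + (1 + a ^ 2) * A₂₂ = 1 + a ^ 2 + b ^ 2) :
    (a * A₁₁ + b * A₁₂) ^ 2 + (a * A₁₂ + b * A₂₂) ^ 2 ≤ (1 + a ^ 2 + b ^ 2) ^ 3 := by
  have htr : A₁₁ + A₂₂ ≤ 1 + a ^ 2 + b ^ 2 := by linarith [hA b (-a)]
  have htr0 : 0 ≤ A₁₁ + A₂₂ := by linarith [hA 1 0, hA 0 1]
  calc _ ≤ (A₁₁ + A₂₂) ^ 2 * (a ^ 2 + b ^ 2) := mulVec_sq_le_of_quadForm_nonneg hA a b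
    _ ≤ (1 + a ^ 2 + b ^ 2) ^ 2 * (1 + a ^ 2 + b ^ 2) := by gcongr; linarith
    _ = _ := by ring

end QuadraticForm

section SecondDerivative

variable {E F : Type*} [NormedAddCommGroup E] [NormedSpace ℝ E] [NormedAddCommGroup F]
  [NormedSpace ℝ F]

theorem fderiv_fderiv_apply {u : E → F} {p : E}
    (hu₂ : DifferentiableAt ℝ (fderiv ℝ u) p) (v w : E) :
    fderiv ℝ (fun q => fderiv ℝ u q w) p v = fderiv ℝ (fderiv ℝ u) p v w := by
  simp [fderiv_clm_apply hu₂ (differentiableAt_const w)]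

theorem differentiableAt_fderiv_of_contDiffAt {u : E → F} {p : E} (hu : ContDiffAt ℝ 2 u p) :
    DifferentiableAt ℝ (fderiv ℝ u) p :=
  (hu.fderiv_right (m := 1) le_rfl).differentiableAt one_ne_zero

theorem differentiableAt_fderiv_apply_of_contDiffAt {u : E → F} {p : E}
    (hu : ContDiffAt ℝ 2 u p) (w : E) : DifferentiableAt ℝ (fun q => fderiv ℝ u q w) p :=
  (differentiableAt_fderiv_of_contDiffAt hu).clm_apply (differentiableAt_const w)

theorem ConvexOn.fderiv_fderiv_apply_self_nonneg {Ω : Set E} {u : E → ℝ} (hΩ : IsOpen Ω)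
    (hconv : ConvexOn ℝ Ω u) (hu : DifferentiableOn ℝ u Ω) {p : E} (hp : p ∈ Ω)
    (hu₂ : DifferentiableAt ℝ (fderiv ℝ u) p) (v : E) :
    0 ≤ fderiv ℝ (fderiv ℝ u) p v v := by
  set L : ℝ →ᵃ[ℝ] E := AffineMap.lineMap p (p + v)
  have hL : ∀ s, HasDerivAt L v s := fun s => by
    simpa using AffineMap.hasDerivAt_lineMap (a := p) (b := p + v) (x := s)
  set I : Set ℝ := L ⁻¹' Ω
  have hI : IsOpen I := hΩ.preimage AffineMap.lineMap_continuous
  have h0 : (0 : ℝ) ∈ I := by simpa [I, L] using hp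
  -- along the line, `s ↦ u' (L s) v` is the derivative of the convex function `u ∘ L`
  have hmono : MonotoneOn (fun s => fderiv ℝ u (L s) v) I := by
    have hd : ∀ s ∈ I, HasDerivAt (u ∘ L) (fderiv ℝ u (L s) v) s := fun s hs =>
      (hu.differentiableAt (hΩ.mem_nhds hs)).hasFDerivAt.comp_hasDerivAt s (hL s)
    have := (hconv.comp_affineMap L).monotoneOn_deriv fun s hs => (hd s hs).differentiableAt
    exact this.congr fun s hs => (hd s hs).deriv
  have hd₂ : HasDerivAt (fun s => fderiv ℝ u (L s) v) (fderiv ℝ (fderiv ℝ u) p v v) 0 := by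
    have hL0 : L 0 = p := by simp [L]
    rw [← hL0] at hu₂ ⊢
    have := hu₂.hasFDerivAt.comp_hasDerivAt (0 : ℝ) (hL 0)
    simpa using this.clm_apply (hasDerivAt_const 0 v)
  have hacc : AccPt 0 (𝓟 I) := by
    simpa using PerfectSpace.univ_preperfect.open_inter hI 0 ⟨h0, trivial⟩
  exact hd₂.hasDerivWithinAt.nonneg_of_monotoneOn hacc hmono

end SecondDerivative

theorem pd1_pd2_comm {u : ℝ × ℝ → ℝ} {p : ℝ × ℝ} (hu : ContDiffAt ℝ 2 u p) :
    pd1 (pd2 u) p = pd2 (pd1 u) p := by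
  have hu₂ := differentiableAt_fderiv_of_contDiffAt hu
  have h := hu.isSymmSndFDerivAt (by simp) (1, 0) (0, 1)
  rwa [← fderiv_fderiv_apply hu₂, ← fderiv_fderiv_apply hu₂] at h

theorem hessian_quadForm_nonneg {Ω : Set (ℝ × ℝ)} (hΩ : IsOpen Ω) {u : ℝ × ℝ → ℝ}
    (hu : ContDiffOn ℝ 2 u Ω) (hconv : ConvexOn ℝ Ω u) {p : ℝ × ℝ} (hp : p ∈ Ω) (v₁ v₂ : ℝ) :
    0 ≤ pd1 (pd1 u) p * v₁ ^ 2 + 2 * pd2 (pd1 u) p * (v₁ * v₂) + pd2 (pd2 u) p * v₂ ^ 2 := by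
  have hup := hu.contDiffAt (hΩ.mem_nhds hp)
  have hu₂ := differentiableAt_fderiv_of_contDiffAt hup
  have h := hconv.fderiv_fderiv_apply_self_nonneg hΩ (hu.differentiableOn two_ne_zero) hp hu₂
    (v₁ • (1, 0) + v₂ • (0, 1))
  simp only [map_add, map_smul, add_apply, smul_apply, smul_eq_mul,
    ← fderiv_fderiv_apply hu₂] at h
  change 0 ≤ v₁ * (v₁ * pd1 (pd1 u) p + v₂ * pd2 (pd1 u) p)
    + v₂ * (v₁ * pd1 (pd2 u) p + v₂ * pd2 (pd2 u) p) at h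
  rw [pd1_pd2_comm hup] at h
  linarith

theorem hasFDerivAt_meanCurv {u : ℝ × ℝ → ℝ} {p : ℝ × ℝ}
    (h₁ : DifferentiableAt ℝ (pd1 u) p) (h₂ : DifferentiableAt ℝ (pd2 u) p) :
    HasFDerivAt (meanCurv u) (-(√(1 + pd1 u p ^ 2 + pd2 u p ^ 2) ^ 3)⁻¹ •
      (pd1 u p • fderiv ℝ (pd1 u) p + pd2 u p • fderiv ℝ (pd2 u) p)) p := by
  set W := 1 + pd1 u p ^ 2 + pd2 u p ^ 2
  have hW : 0 < W := by positivity
  have hφ : HasFDerivAt (fun q => 1 + pd1 u q ^ 2 + pd2 u q ^ 2)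
      ((2 * pd1 u p) • fderiv ℝ (pd1 u) p + (2 * pd2 u p) • fderiv ℝ (pd2 u) p) p := by
    simpa using ((h₁.hasFDerivAt.pow 2).const_add 1).fun_add (h₂.hasFDerivAt.pow 2)
  have hinv : HasDerivAt (fun t => (√t)⁻¹) (-(2 * √W ^ 3)⁻¹) W := by
    refine ((Real.hasDerivAt_sqrt hW.ne').fun_inv (Real.sqrt_pos.2 hW).ne').congr_deriv ?_
    field_simp
  have hmc : meanCurv u = fun q => (√(1 + pd1 u q ^ 2 + pd2 u q ^ 2))⁻¹ := by
    funext q; simp [meanCurv]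
  rw [hmc]
  refine (hinv.comp_hasFDerivAt p hφ).congr_fderiv ?_
  rw [mul_smul, mul_smul, ← smul_add, smul_smul]
  congr 1
  field_simp

theorem differentiableAt_meanCurv {u : ℝ × ℝ → ℝ} {p : ℝ × ℝ} (hu : ContDiffAt ℝ 2 u p) :
    DifferentiableAt ℝ (meanCurv u) p :=
  (hasFDerivAt_meanCurv (differentiableAt_fderiv_apply_of_contDiffAt hu _)
    (differentiableAt_fderiv_apply_of_contDiffAt hu _)).differentiableAt

theorem pd1_meanCurv_sq_add_pd2_sq_le_one {u : ℝ × ℝ → ℝ} {p : ℝ × ℝ} (hu : ContDiffAt ℝ 2 u p)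
    (hA : ∀ v₁ v₂ : ℝ,
      0 ≤ pd1 (pd1 u) p * v₁ ^ 2 + 2 * pd2 (pd1 u) p * (v₁ * v₂) + pd2 (pd2 u) p * v₂ ^ 2)
    (hsol : IsSolitonAt u p) :
    pd1 (meanCurv u) p ^ 2 + pd2 (meanCurv u) p ^ 2 ≤ 1 := by
  have hH := (hasFDerivAt_meanCurv (differentiableAt_fderiv_apply_of_contDiffAt hu _)
    (differentiableAt_fderiv_apply_of_contDiffAt hu _)).fderiv
  have hW : 0 < 1 + pd1 u p ^ 2 + pd2 u p ^ 2 := by positivity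
  have hs : (√(1 + pd1 u p ^ 2 + pd2 u p ^ 2) ^ 3) ^ 2 = (1 + pd1 u p ^ 2 + pd2 u p ^ 2) ^ 3 := by
    rw [← pow_mul, mul_comm, pow_mul, Real.sq_sqrt hW.le]
  have h₁ : pd1 (meanCurv u) p = -(√(1 + pd1 u p ^ 2 + pd2 u p ^ 2) ^ 3)⁻¹ *
      (pd1 u p * pd1 (pd1 u) p + pd2 u p * pd1 (pd2 u) p) := by
    rw [pd1, hH]; rfl
  have h₂ : pd2 (meanCurv u) p = -(√(1 + pd1 u p ^ 2 + pd2 u p ^ 2) ^ 3)⁻¹ *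
      (pd1 u p * pd2 (pd1 u) p + pd2 u p * pd2 (pd2 u) p) := by
    rw [pd2, hH]; rfl
  rw [h₁, h₂, pd1_pd2_comm hu, mul_pow, mul_pow, ← mul_add, neg_sq, inv_pow, hs,
    inv_mul_le_one₀ (by positivity)]
  exact soliton_mulVec_sq_le hA hsol

theorem abs_sub_le_of_pd1_sq_add_pd2_sq_le {Ω : Set (ℝ × ℝ)} (hΩ : Convex ℝ Ω) {f : ℝ × ℝ → ℝ}
    (hf : ∀ p ∈ Ω, DifferentiableAt ℝ f p) {C : ℝ} (hC : 0 ≤ C)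
    (hgrad : ∀ p ∈ Ω, pd1 f p ^ 2 + pd2 f p ^ 2 ≤ C ^ 2) {x y : ℝ × ℝ} (hx : x ∈ Ω)
    (hy : y ∈ Ω) :
    |f x - f y| ≤ C * √((x.1 - y.1) ^ 2 + (x.2 - y.2) ^ 2) := by
  have hdir : ∀ p ∈ Ω, ‖fderiv ℝ f p (x - y)‖ ≤ C * √((x.1 - y.1) ^ 2 + (x.2 - y.2) ^ 2) := by
    intro p hp
    have hxy : x - y = (x.1 - y.1) • ((1 : ℝ), (0 : ℝ)) + (x.2 - y.2) • ((0 : ℝ), (1 : ℝ)) := by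
      ext <;> simp
    rw [hxy, map_add, map_smul, map_smul, ← pd1, ← pd2, smul_eq_mul, smul_eq_mul, Real.norm_eq_abs,
      ← Real.sqrt_sq hC, ← Real.sqrt_mul (sq_nonneg C)]
    apply Real.abs_le_sqrt
    -- Cauchy–Schwarz
    nlinarith [sq_nonneg ((x.1 - y.1) * pd2 f p - (x.2 - y.2) * pd1 f p),
      mul_le_mul_of_nonneg_right (hgrad p hp)
        (add_nonneg (sq_nonneg (x.1 - y.1)) (sq_nonneg (x.2 - y.2)))]
  have hseg : ∀ t ∈ Set.Icc (0 : ℝ) 1, HasDerivWithinAt (fun t => f (AffineMap.lineMap y x t))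
      (fderiv ℝ f (AffineMap.lineMap y x t) (x - y)) (Set.Icc 0 1) t := fun t ht =>
    ((hf _ (hΩ.lineMap_mem hy hx ht)).hasFDerivAt.comp_hasDerivAt t
      AffineMap.hasDerivAt_lineMap).hasDerivWithinAt
  simpa using Convex.norm_image_sub_le_of_norm_hasDerivWithin_le hseg
    (fun t ht => hdir _ (hΩ.lineMap_mem hy hx ht)) (convex_Icc 0 1)
    (Set.left_mem_Icc.2 zero_le_one) (Set.right_mem_Icc.2 zero_le_one)

/-- For a `C²` convex graphical translating soliton on an open convex set
`Ω ⊆ ℝ²`, the mean curvature `H = 1/√(1+|∇u|²)` satisfies `|∇H| ≤ 1` on `Ω`; consequently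
`H` is `1`-Lipschitz with respect to the Euclidean distance on `Ω`. -/
theorem meanCurvature_gradient_bound (Ω : Set (ℝ × ℝ)) (hΩ : IsOpen Ω)
    (hΩconv : Convex ℝ Ω) (u : ℝ × ℝ → ℝ)
    (hu : ContDiffOn ℝ 2 u Ω)
    (hconv : ConvexOn ℝ Ω u)
    (hsol : ∀ p ∈ Ω, IsSolitonAt u p) :
    (∀ p ∈ Ω, (pd1 (meanCurv u) p) ^ 2 + (pd2 (meanCurv u) p) ^ 2 ≤ 1) ∧
    (∀ x ∈ Ω, ∀ y ∈ Ω, |meanCurv u x - meanCurv u y| ≤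
      Real.sqrt ((x.1 - y.1) ^ 2 + (x.2 - y.2) ^ 2)) := by
  have hu' : ∀ p ∈ Ω, ContDiffAt ℝ 2 u p := fun p hp => hu.contDiffAt (hΩ.mem_nhds hp)
  have hgrad : ∀ p ∈ Ω, pd1 (meanCurv u) p ^ 2 + pd2 (meanCurv u) p ^ 2 ≤ 1 := fun p hp =>
    pd1_meanCurv_sq_add_pd2_sq_le_one (hu' p hp) (hessian_quadForm_nonneg hΩ hu hconv hp)
      (hsol p hp)
  refine ⟨hgrad, fun x hx y hy => ?_⟩
  simpa using abs_sub_le_of_pd1_sq_add_pd2_sq_le hΩconv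
    (fun p hp => differentiableAt_meanCurv (hu' p hp)) zero_le_one
    (by simpa using hgrad) hx hy
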